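/- Factorization Lemma (Lemma 2.2). Fix p ∈ [0,‖D‖_∞^{-1}] such that θ(p) = P_p(|C(0)| = ∞) = 0, a directed edge (u,v), a vertex y, and events E, F. Then E_p[ 1{E on C̃^{(u,v)}(y), F off C̃^{(u,v)}(y)} ] = E_0[ 1{E on C̃^{(u,v)}_0(y)} · E_1[ 1{F off C̃^{(u,v)}_0(y)} ] ], where the subscripts 0 and 1 refer to two independent percolation configurations with the same law P_p, and C̃^{(u,v)}_0(y) is the restricted cluster in configuration 0. Moreover, when E ⊆ {u ∈ C̃^{(u,v)}(y)} ∩ {v ∉ C̃^{(u,v)}(y)}, the event on the left-hand side is independent of the occupation status of the edge (u,v). -/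

import Mathlib

open MeasureTheory Filter
open scoped ENNReal Topology Classical

noncomputable section

namespace Percolation

/-- Vertices of the lattice `ℤ^d`. -/
abbrev Vert (d : ℕ) := Fin d → ℤ

/-- Euclidean norm of a lattice point. -/
def euc {d : ℕ} (x : Vert d) : ℝ := Real.sqrt (∑ i, ((x i : ℝ)) ^ 2)

/-- Sup norm of a lattice point. -/
def snorm' {d : ℕ} (x : Vert d) : ℕ := Finset.univ.sup fun i => (x i).natAbs

/-- Unordered edges (bonds) of the complete graph on `ℤ^d`. -/
abbrev Edge (d : ℕ) := Sym2 (Vert d)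

/-- Percolation configurations: each bond is open (`true`) or closed (`false`). -/
abbrev Config (d : ℕ) := Edge d → Bool

/-- `ℝ≥0∞`-valued indicator of a proposition. -/
def ind (p : Prop) : ℝ≥0∞ := if p then 1 else 0

/-- Symmetrisation of a step distribution. Under the symmetry assumption
`D (-x) = D x` it agrees with `fun x y => D (y - x)`. -/
def symD {d : ℕ} (D : Vert d → ℝ) (x y : Vert d) : ℝ := (D (x - y) + D (y - x)) / 2

lemma symD_comm {d : ℕ} (D : Vert d → ℝ) (x y : Vert d) : symD D x y = symD D y x := by
  unfold symD; ring

/-- The weight attached to an unordered edge by the step distribution `D`. -/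
def edgeProb {d : ℕ} (D : Vert d → ℝ) : Edge d → ℝ :=
  Sym2.lift ⟨symD D, symD_comm D⟩

/-- A bond percolation model on `ℤ^d`: a step distribution `D` which is a
lattice-symmetric probability distribution on `ℤ^d` vanishing at the origin,
together with, for every parameter `p`, the probability measure `P p` on
configurations under which the bonds are independently open, the bond `{x,y}`
being open with probability `p * D (y - x)` (for admissible `p`). -/
structure Model (d : ℕ) where
  D : Vert d → ℝ
  P : ℝ → Measure (Config d)
  D_zero : D 0 = 0
  D_nonneg : ∀ x, 0 ≤ D x
  D_symm : ∀ x, D (-x) = D x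
  D_perm : ∀ (σ : Equiv.Perm (Fin d)) (x : Vert d), D (x ∘ σ) = D x
  D_flip : ∀ ε : Fin d → ℤ, (∀ i, ε i = 1 ∨ ε i = -1) →
      ∀ x : Vert d, (D fun i => ε i * x i) = D x
  D_sum : HasSum D 1
  P_prob : ∀ p, IsProbabilityMeasure (P p)
  P_cylinder : ∀ p : ℝ, 0 ≤ p → (∀ x, p * D x ≤ 1) →
      ∀ (S : Finset (Edge d)) (f : Edge d → Bool),
        P p {ω | ∀ e ∈ S, ω e = f e} =
          ∏ e ∈ S, ENNReal.ofReal (if f e then p * edgeProb D e else 1 - p * edgeProb D e)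

/-- `x` and `y` are distinct and joined by an open bond. -/
def openStep {d : ℕ} (ω : Config d) (x y : Vert d) : Prop := x ≠ y ∧ ω s(x, y) = true

/-- `{x ↔ y}`: `x` is connected to `y` by a path of open bonds. -/
def Connected {d : ℕ} (ω : Config d) (x y : Vert d) : Prop :=
  Relation.ReflTransGen (openStep ω) x y

/-- Connectivity using only open bonds belonging to the bond set `K`. -/
def ConnectedIn {d : ℕ} (ω : Config d) (K : Set (Edge d)) (x y : Vert d) : Prop :=
  Relation.ReflTransGen (fun a b => a ≠ b ∧ s(a, b) ∈ K ∧ ω s(a, b) = true) x y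

/-- The open cluster of `x`. -/
def cluster {d : ℕ} (ω : Config d) (x : Vert d) : Set (Vert d) := {y | Connected ω x y}

/-- The two-point event `{x ↔ y}`. -/
def conn {d : ℕ} (x y : Vert d) : Set (Config d) := {ω | Connected ω x y}

/-- The cluster of `x` reaches euclidean distance `> r` from the origin,
i.e. the event `{x ↔ Q_r^c}` holds in `ω`. -/
def Arm {d : ℕ} (ω : Config d) (x : Vert d) (r : ℝ) : Prop :=
  ∃ y : Vert d, r < euc y ∧ Connected ω x y

/-- The one-arm event `{x ↔ Q_r^c}`. -/
def armEvent {d : ℕ} (x : Vert d) (r : ℝ) : Set (Config d) := {ω | Arm ω x r}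

/-- The euclidean ball `Q_r` (as a set of vertices). -/
def ballSet (d : ℕ) (r : ℝ) : Set (Vert d) := {x | euc x ≤ r}

namespace Model

variable {d : ℕ} (M : Model d)

/-- The two-point function `τ_p`. -/
def tau (p : ℝ) (x : Vert d) : ℝ≥0∞ := M.P p (conn 0 x)

/-- The susceptibility `χ(p)`. -/
def chi (p : ℝ) : ℝ≥0∞ := ∑' x : Vert d, M.tau p x

/-- The critical point `p_c = sup {p : χ(p) < ∞}`. -/
def pc : ℝ := sSup {p : ℝ | 0 ≤ p ∧ M.chi p ≠ ∞}

/-- The triangle diagram `△_{p_c}(0)`. -/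
def triangleDiagram : ℝ≥0∞ :=
  ∑' x : Vert d, ∑' y : Vert d, M.tau M.pc x * M.tau M.pc (y - x) * M.tau M.pc y

/-- The strong triangle condition with parameter `β`: `△_{p_c}(0) ≤ 1 + O(β)`. -/
def StrongTriangle (β : ℝ) : Prop := M.triangleDiagram ≤ 1 + ENNReal.ofReal β

/-- The susceptibility measure `Q_p(F) = χ(p)⁻¹ ∑_x P_p(F ∩ {0 ↔ x})`. -/
def Qp (p : ℝ) (F : Set (Config d)) : ℝ≥0∞ :=
  (∑' x : Vert d, M.P p (F ∩ conn 0 x)) / M.chi p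

end Model

/-- Cylinder events: events determined by the states of finitely many bonds. -/
def IsCylinder {d : ℕ} (F : Set (Config d)) : Prop :=
  ∃ S : Finset (Edge d), ∀ ω ω' : Config d, (∀ e ∈ S, ω e = ω' e) → (ω ∈ F ↔ ω' ∈ F)

/-- `F` is determined by the bonds with both endpoints in `Q_m`. -/
def DeterminedOnBall {d : ℕ} (F : Set (Config d)) (m : ℝ) : Prop :=
  ∀ ω ω' : Config d,
    (∀ e : Edge d, (∀ v ∈ e, v ∈ ballSet d m) → ω e = ω' e) → (ω ∈ F ↔ ω' ∈ F)

/-- Nearest-neighbour percolation. -/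
def IsNearestNeighbor {d : ℕ} (M : Model d) : Prop :=
  ∀ x : Vert d, M.D x = if euc x = 1 then 1 / (2 * (d : ℝ)) else 0

/-- Finite-range spread-out percolation with parameter `L`. -/
def IsFiniteRangeSpreadOut {d : ℕ} (M : Model d) (L : ℕ) : Prop :=
  ∀ x : Vert d, M.D x =
    if x ≠ 0 ∧ snorm' x ≤ L then ((2 * (L : ℝ) + 1) ^ d - 1)⁻¹ else 0

/-- Long-range spread-out percolation with parameters `L` and `α`. -/
def IsLongRangeSpreadOut {d : ℕ} (M : Model d) (L : ℕ) (α : ℝ) : Prop :=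
  ∃ c : ℝ, 0 < c ∧ ∀ x : Vert d, x ≠ 0 →
    M.D x = c / max (euc x / (L : ℝ)) 1 ^ ((d : ℝ) + α)

/-- Admissible long-range exponents: `α ∈ (0,2) ∪ (2,∞)`. -/
def GoodAlpha (α : ℝ) : Prop := 0 < α ∧ α ≠ 2

/-- The high-dimensional model classes of the paper, with `a` the effective
exponent `2 ∧ α` (read as `2` for the finite-range models). -/
def ModelClass {d : ℕ} (M : Model d) (a : ℝ) : Prop :=
  (IsNearestNeighbor M ∧ 19 ≤ d ∧ a = 2) ∨
  (∃ L : ℕ, IsFiniteRangeSpreadOut M L ∧ 6 < d ∧ a = 2) ∨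
  (∃ (L : ℕ) (α : ℝ), IsLongRangeSpreadOut M L α ∧ GoodAlpha α ∧
      3 * min 2 α < (d : ℝ) ∧ a = min 2 α)

/-- The one-arm probability is of order `r^{-1/ρ}`:
`c r^{-1/ρ} ≤ P_{p_c}(0 ↔ Q_r^c) ≤ C r^{-1/ρ}` for all `r ≥ 1`. -/
def OneArmBounds {d : ℕ} (M : Model d) (ρ : ℝ) : Prop :=
  ∃ c C : ℝ, 0 < c ∧ c ≤ C ∧ ∀ r : ℝ, 1 ≤ r →
    ENNReal.ofReal (c * r ^ (-(1 / ρ))) ≤ M.P M.pc (armEvent 0 r) ∧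
      M.P M.pc (armEvent 0 r) ≤ ENNReal.ofReal (C * r ^ (-(1 / ρ)))

/-- The configuration `ω` restricted to the vertex set `A`: every bond not
having both endpoints in `A` is made closed. -/
def restrictConfig {d : ℕ} (ω : Config d) (A : Set (Vert d)) : Config d :=
  fun e => if ∀ v ∈ e, v ∈ A then ω e else false

/-- The event `E` occurs on the vertex set `A` in the configuration `ω`. -/
def OccursOn {d : ℕ} (E : Set (Config d)) (A : Set (Vert d)) (ω : Config d) : Prop :=
  restrictConfig ω A ∈ E

/-- The event `E` occurs off the vertex set `A` in the configuration `ω`. -/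
def OccursOff {d : ℕ} (E : Set (Config d)) (A : Set (Vert d)) (ω : Config d) : Prop :=
  restrictConfig ω Aᶜ ∈ E

/-- The configuration `ω` with the bond `e` made closed. -/
def closeEdge {d : ℕ} (ω : Config d) (e : Edge d) : Config d := Function.update ω e false

/-- The configuration `ω` with the bond `e` made open. -/
def openEdge' {d : ℕ} (ω : Config d) (e : Edge d) : Config d := Function.update ω e true

/-- The restricted cluster `C̃^e(A)` of the vertex set `A`: everything that `A`
is connected to after the bond `e` is made closed. -/
def tilCSet {d : ℕ} (ω : Config d) (e : Edge d) (A : Set (Vert d)) : Set (Vert d) :=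
  {z | ∃ a ∈ A, Connected (closeEdge ω e) a z}

/-- The restricted cluster `C̃^{(u,v)}(y)`. -/
def tilC {d : ℕ} (ω : Config d) (u v y : Vert d) : Set (Vert d) :=
  {z | Connected (closeEdge ω s(u, v)) y z}

/-- `{x ↔ y on A}`. -/
def ConnOn {d : ℕ} (ω : Config d) (A : Set (Vert d)) (x y : Vert d) : Prop :=
  Connected (restrictConfig ω A) x y

/-- `{x ↔ y through A}`, also written `{x ↔^A y}`. -/
def ConnThrough {d : ℕ} (ω : Config d) (A : Set (Vert d)) (x y : Vert d) : Prop :=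
  Connected ω x y ∧ ¬ ConnOn ω Aᶜ x y

/-- `{x ↔ Q_r^c on A}`. -/
def ArmOn {d : ℕ} (ω : Config d) (A : Set (Vert d)) (x : Vert d) (r : ℝ) : Prop :=
  Arm (restrictConfig ω A) x r

/-- `{x ↔ Q_r^c through A}`. -/
def ArmThrough {d : ℕ} (ω : Config d) (A : Set (Vert d)) (x : Vert d) (r : ℝ) : Prop :=
  Arm ω x r ∧ ¬ ArmOn ω Aᶜ x r

/-- `(u,v)` is a directed pivotal bond for the connection `x ↔ y` in `ω`:
with the bond closed, `x` is connected to `u` and `v` to `y` but `x` is not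
connected to `y`, while with the bond open `x` is connected to `y`. -/
def PivotalConn {d : ℕ} (ω : Config d) (u v x y : Vert d) : Prop :=
  Connected (openEdge' ω s(u, v)) x y ∧ ¬ Connected (closeEdge ω s(u, v)) x y ∧
    Connected (closeEdge ω s(u, v)) x u ∧ Connected (closeEdge ω s(u, v)) v y

/-- `(u,v)` is a directed pivotal bond for the one-arm event `{x ↔ Q_r^c}`. -/
def PivotalArm {d : ℕ} (ω : Config d) (u v x : Vert d) (r : ℝ) : Prop :=
  Arm (openEdge' ω s(u, v)) x r ∧ ¬ Arm (closeEdge ω s(u, v)) x r ∧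
    Connected (closeEdge ω s(u, v)) x u ∧ Arm (closeEdge ω s(u, v)) v r

/-- `(u,v)` is an open directed pivotal bond for `x ↔ y`. -/
def OpenPivotalConn {d : ℕ} (ω : Config d) (u v x y : Vert d) : Prop :=
  ω s(u, v) = true ∧ PivotalConn ω u v x y

/-- `(u,v)` is an open directed pivotal bond for `{x ↔ Q_r^c}`. -/
def OpenPivotalArm {d : ℕ} (ω : Config d) (u v x : Vert d) (r : ℝ) : Prop :=
  ω s(u, v) = true ∧ PivotalArm ω u v x r

/-- The event `E'(v,x;A)`. -/
def Eprime {d : ℕ} (ω : Config d) (v x : Vert d) (A : Set (Vert d)) : Prop :=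
  ConnThrough ω A v x ∧
    ∀ u₁ v₁ : Vert d, PivotalConn ω u₁ v₁ v x → ¬ ConnThrough ω A v u₁

/-- The event `E''(v,r;A)`. -/
def Edprime {d : ℕ} (ω : Config d) (v : Vert d) (r : ℝ) (A : Set (Vert d)) : Prop :=
  ArmThrough ω A v r ∧
    ∀ u₁ v₁ : Vert d, PivotalArm ω u₁ v₁ v r → ¬ ConnThrough ω A v u₁

/-- The event `H'(v,z,x;A) = E'(v,x;A) ∩ ({v ↔ z} ∘ {z ↔ x})`. -/
def Hprime {d : ℕ} (ω : Config d) (v z x : Vert d) (A : Set (Vert d)) : Prop :=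
  Eprime ω v x A ∧ ∃ K : Set (Edge d), ConnectedIn ω K v z ∧ ConnectedIn ω Kᶜ z x

/-- `{A ⇔ x}`: the vertex set `A` is doubly connected to `x`. -/
def DoubleConnSet {d : ℕ} (ω : Config d) (A : Set (Vert d)) (x : Vert d) : Prop :=
  x ∈ A ∨ ∃ K : Set (Edge d),
    (∃ a ∈ A, ConnectedIn ω K a x) ∧ ∃ a ∈ A, ConnectedIn ω Kᶜ a x

/-- `{A ⇔ Q_r^c}`: the vertex set `A` is doubly connected to `Q_r^c`. -/
def DoubleArmSet {d : ℕ} (ω : Config d) (A : Set (Vert d)) (r : ℝ) : Prop :=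
  ∃ K : Set (Edge d),
    (∃ a ∈ A, ∃ y : Vert d, r < euc y ∧ ConnectedIn ω K a y) ∧
      ∃ a ∈ A, ∃ y : Vert d, r < euc y ∧ ConnectedIn ω Kᶜ a y

/-- `{A ↔ Q_r^c}`. -/
def SetArm {d : ℕ} (ω : Config d) (A : Set (Vert d)) (r : ℝ) : Prop :=
  ∃ a ∈ A, Arm ω a r

/-- The event (for a directed bond `b`) appearing in the cutting-bond
partition: `E'(v,b̲;A)` together with `b ∈ E_r` being open and pivotal for
`{v ↔ Q_r^c}`. -/
def CutAt {d : ℕ} (ω : Config d) (v : Vert d) (r : ℝ) (A : Set (Vert d))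
    (b : Vert d × Vert d) : Prop :=
  euc b.1 ≤ r ∧ Eprime ω v b.1 A ∧ ω s(b.1, b.2) = true ∧ PivotalArm ω b.1 b.2 v r

/-- The weight `p_c D(v-u)` of a directed bond `(u,v)`. -/
def edgeWeight {d : ℕ} (M : Model d) (b : Vert d × Vert d) : ℝ≥0∞ :=
  ENNReal.ofReal (M.pc * M.D (b.2 - b.1))

/-- Membership of a directed bond in `E_r`. -/
def inEr {d : ℕ} (r : ℝ) (b : Vert d × Vert d) : Prop := euc b.1 ≤ r

/-- The nested expectations of the lace expansion: each additional bond in the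
list gives a new independent critical configuration with the indicator of
`E'(w, u_j; C̃_{j-1})`, and the recursion records the restricted cluster
`C̃_j = C̃^{(u_j,v_j)}(v_{j-1})` passed on to the next configuration; `final`
is evaluated on the last cluster and vertex. -/
def laceRec {d : ℕ} (M : Model d) (final : Set (Vert d) → Vert d → ℝ≥0∞) :
    List (Vert d × Vert d) → Set (Vert d) → Vert d → ℝ≥0∞
  | [], A, w => final A w
  | b :: L, A, w =>
      ∫⁻ ω, ind (Eprime ω w b.1 A) *
        laceRec M final L (tilC ω b.1 b.2 w) b.2 ∂ M.P M.pc

/-- Generic lace-expansion coefficient with `n+1` directed bonds summed over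
`E_r`, initial (configuration-`0`) indicator `init` and final factor `final`. -/
def laceSum {d : ℕ} (M : Model d) (init : Config d → Vert d → Prop) (m r : ℝ)
    (final : Set (Vert d) → Vert d → ℝ≥0∞) (n : ℕ) : ℝ≥0∞ :=
  ∑' es : Fin (n + 1) → Vert d × Vert d,
    ind (∀ j, inEr r (es j)) * (∏ j, edgeWeight M (es j)) *
      ∫⁻ ω₀, ind (init ω₀ (es 0).1) *
        laceRec M final (List.ofFn fun j : Fin n => es j.succ)
          (tilCSet ω₀ s((es 0).1, (es 0).2) (ballSet d m)) (es 0).2 ∂ M.P M.pc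

/-- The lace-expansion coefficients `π^{(n)}(x,r;F)`. -/
def piCoeff {d : ℕ} (M : Model d) (F : Set (Config d)) (m r : ℝ) (x : Vert d) :
    ℕ → ℝ≥0∞
  | 0 => M.P M.pc (F ∩ {ω | Connected ω 0 x ∧ DoubleConnSet ω (ballSet d m) x})
  | n + 1 =>
      laceSum M (fun ω u => ω ∈ F ∧ Connected ω 0 u ∧ DoubleConnSet ω (ballSet d m) u) m r
        (fun A w => M.P M.pc {ω | Eprime ω w x A}) n

/-- The lace-expansion coefficients `ξ^{(n)}(r;F)`. -/
def xiCoeff {d : ℕ} (M : Model d) (F : Set (Config d)) (m r : ℝ) : ℕ → ℝ≥0∞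
  | 0 => M.P M.pc (F ∩ {ω | Arm ω 0 r ∧ DoubleArmSet ω (ballSet d m) r})
  | n + 1 =>
      laceSum M (fun ω u => ω ∈ F ∧ Connected ω 0 u ∧ DoubleConnSet ω (ballSet d m) u) m r
        (fun A w => M.P M.pc {ω | Edprime ω w r A}) n

/-- The final factor of `γ^{(n)}`, consuming the last directed bond `b`. -/
def gammaFinal {d : ℕ} (M : Model d) (r : ℝ) (b : Vert d × Vert d)
    (A : Set (Vert d)) (w : Vert d) : ℝ≥0∞ :=
  ∫⁻ ω, ind (OccursOn {ω' | Eprime ω' w b.1 A ∧ Arm ω' w r} (tilC ω b.1 b.2 w) ω) *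
      M.P M.pc {ω₁ | ArmOn ω₁ (tilC ω b.1 b.2 w)ᶜ b.2 r} ∂ M.P M.pc

/-- The lace-expansion coefficients `γ^{(n)}(r;F)`. -/
def gammaCoeff {d : ℕ} (M : Model d) (F : Set (Config d)) (m r : ℝ) : ℕ → ℝ≥0∞
  | 0 => ∑' b : Vert d × Vert d,
      ind (inEr r b) * edgeWeight M b *
        ∫⁻ ω, ind (OccursOn
            (F ∩ {ω' | Connected ω' 0 b.1 ∧ DoubleConnSet ω' (ballSet d m) b.1 ∧
              SetArm ω' (ballSet d m) r})
            (tilCSet ω s(b.1, b.2) (ballSet d m)) ω) *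
          M.P M.pc {ω₁ | ArmOn ω₁ (tilCSet ω s(b.1, b.2) (ballSet d m))ᶜ b.2 r} ∂ M.P M.pc
  | n + 1 => ∑' es : Fin (n + 2) → Vert d × Vert d,
      ind (∀ j, inEr r (es j)) * (∏ j, edgeWeight M (es j)) *
        ∫⁻ ω₀, ind (ω₀ ∈ F ∧ Connected ω₀ 0 (es 0).1 ∧
              DoubleConnSet ω₀ (ballSet d m) (es 0).1) *
          laceRec M (gammaFinal M r (es (Fin.last (n + 1))))
            (List.ofFn fun j : Fin n => es (j.succ.castSucc : Fin (n + 2)))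
            (tilCSet ω₀ s((es 0).1, (es 0).2) (ballSet d m)) (es 0).2 ∂ M.P M.pc

/-- `P_{p_c}(w ↔ Q_r^c) - P_{p_c}^{A}(w ↔ Q_r^c)`. -/
def diffArm {d : ℕ} (M : Model d) (r : ℝ) (A : Set (Vert d)) (w : Vert d) : ℝ≥0∞ :=
  M.P M.pc (armEvent w r) - M.P M.pc {ω | ArmOn ω Aᶜ w r}

/-- The lace-expansion remainder `R^{(N)}(r;F)`. -/
def RCoeff {d : ℕ} (M : Model d) (F : Set (Config d)) (m r : ℝ) (N : ℕ) : ℝ≥0∞ :=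
  laceSum M (fun ω u => ω ∈ F ∧ Connected ω 0 u ∧ DoubleConnSet ω (ballSet d m) u) m r
    (diffArm M r) N

/-- The lace-expansion coefficients `ψ^{(n)}(v,r;F)`. -/
def psiCoeff {d : ℕ} (M : Model d) (F : Set (Config d)) (m r : ℝ) (n : ℕ)
    (v : Vert d) : ℝ≥0∞ :=
  ∑' u : Vert d, ind (euc u ≤ r) * ENNReal.ofReal (M.pc * M.D (v - u)) *
    piCoeff M F m r u n

/-- The truncated coefficients `π^{(n)}_m(x,r)`. -/
def piM {d : ℕ} (M : Model d) (m r : ℝ) (x : Vert d) : ℕ → ℝ≥0∞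
  | 0 => M.P M.pc {ω | Eprime ω 0 x (ballSet d m)}
  | n + 1 =>
      laceSum M (fun ω u => Eprime ω 0 u (ballSet d m)) m r
        (fun A w => M.P M.pc {ω | Eprime ω w x A}) n

/-- The truncated coefficients `φ^{(n)}_m(z,x,r)`. -/
def phiM {d : ℕ} (M : Model d) (m r : ℝ) (z x : Vert d) : ℕ → ℝ≥0∞
  | 0 => M.P M.pc {ω | Hprime ω 0 z x (ballSet d m)}
  | n + 1 =>
      laceSum M (fun ω u => Eprime ω 0 u (ballSet d m)) m r
        (fun A w => M.P M.pc {ω | Hprime ω w z x A}) n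

/-- `Π̃_m(x,r)`. -/
def PiTilde {d : ℕ} (M : Model d) (m r : ℝ) (x : Vert d) : ℝ≥0∞ :=
  ∑' n : ℕ, piM M m r x n

/-- `Φ̃_m(x,y,r)`. -/
def PhiTilde {d : ℕ} (M : Model d) (m r : ℝ) (x y : Vert d) : ℝ≥0∞ :=
  ∑' n : ℕ, phiM M m r x y n

/-- A backbone bond: the directed bond `(u,v)` is open and `{0 ↔ u}` and
`{v ↔ ∞}` occur disjointly. -/
def BackboneEdge {d : ℕ} (ω : Config d) (u v : Vert d) : Prop :=
  u ≠ v ∧ ω s(u, v) = true ∧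
    ∃ K : Set (Edge d), ConnectedIn ω K 0 u ∧ {y | ConnectedIn ω Kᶜ v y}.Infinite

/-- A backbone-pivotal bond: the open directed bond `(u,v)` is used by every
infinite self-avoiding walk in the cluster of the origin starting at `0`. -/
def BackbonePivotal {d : ℕ} (ω : Config d) (u v : Vert d) : Prop :=
  u ≠ v ∧ ω s(u, v) = true ∧ (cluster ω 0).Infinite ∧
    ¬ (cluster (closeEdge ω s(u, v)) 0).Infinite ∧
    Connected (closeEdge ω s(u, v)) 0 u ∧ (cluster (closeEdge ω s(u, v)) v).Infinite

/-- `b` is the `k`-th open (directed) pivotal bond for `{0 ↔ x}` (`k ≥ 1`). -/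
def NthPivotal {d : ℕ} (ω : Config d) (x : Vert d) (k : ℕ)
    (b : Vert d × Vert d) : Prop :=
  OpenPivotalConn ω b.1 b.2 0 x ∧
    {b' : Vert d × Vert d | OpenPivotalConn ω b'.1 b'.2 0 x ∧
        Connected (closeEdge ω s(b.1, b.2)) 0 b'.2}.ncard = k - 1

/-- `b` is the `k`-th backbone-pivotal bond (`k ≥ 1`). -/
def NthBbPivotal {d : ℕ} (ω : Config d) (k : ℕ) (b : Vert d × Vert d) : Prop :=
  BackbonePivotal ω b.1 b.2 ∧
    {b' : Vert d × Vert d | BackbonePivotal ω b'.1 b'.2 ∧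
        Connected (closeEdge ω s(b.1, b.2)) 0 b'.2}.ncard = k - 1

/-- `Z_m^x`: the union of the first `m` sausages of the connection `{0 ↔ x}`. -/
def ZmConn {d : ℕ} (ω : Config d) (x : Vert d) (m : ℕ) : Set (Vert d) :=
  {z | ∃ k, 1 ≤ k ∧ k ≤ m ∧ ∃ b : Vert d × Vert d,
      NthPivotal ω x k b ∧ Connected (closeEdge ω s(b.1, b.2)) 0 z}

/-- `Z_m^∞`: the union of the first `m` backbone sausages. -/
def ZmInf {d : ℕ} (ω : Config d) (m : ℕ) : Set (Vert d) :=
  {z | ∃ k, 1 ≤ k ∧ k ≤ m ∧ ∃ b : Vert d × Vert d,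
      NthBbPivotal ω k b ∧ Connected (closeEdge ω s(b.1, b.2)) 0 z}

/-- A bond of `S[0,x]`: the open bond `(b₁,b₂)` with `{0 ↔ b₁}` and
`{b₂ ↔ x}` occurring disjointly. -/
def SEdge {d : ℕ} (ω : Config d) (x : Vert d) (b : Vert d × Vert d) : Prop :=
  b.1 ≠ b.2 ∧ ω s(b.1, b.2) = true ∧
    ∃ K : Set (Edge d), ConnectedIn ω K 0 b.1 ∧ ConnectedIn ω Kᶜ b.2 x

/-!
Split according to the value `A` of the restricted cluster `C̃^{(u,v)}(y)`, a finite set almost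
surely since `θ(p) = 0` and the law is translation invariant. The event
`{C̃^{(u,v)}(y) = A, E on A}` depends only on the bonds touching `A`, whereas `{F off A}` depends
only on the bonds with both endpoints outside `A`. The bonds being independent (the law is the
product measure `Measure.infinitePi`), the probability of the intersection factorises, and summing
over `A` gives the nested expectation.

For the second part, `E on C̃^{(u,v)}(y)` forces `u ∈ C̃^{(u,v)}(y)` and `v ∉ C̃^{(u,v)}(y)`, so the
bond `{u,v}` lies neither inside nor outside the restricted cluster; toggling it changes neither
the cluster nor the two restricted configurations.
-/

end Percolation

lemma Set.mem_sym2_iff_forall {α : Type*} {s : Set α} {z : Sym2 α} :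
    z ∈ s.sym2 ↔ ∀ a ∈ z, a ∈ s := by
  rw [Set.mem_sym2_iff_subset]
  rfl

section

open ProbabilityTheory Set

theorem ProbabilityTheory.IndepFun.measure_inter_preimage_eq_mul_of_measurableEmbedding
    {Ω α β : Type*} [MeasurableSpace Ω] [MeasurableSpace α] [MeasurableSpace β]
    {μ : Measure Ω} [IsProbabilityMeasure μ] {f : Ω → α} {g : Ω → β}
    (hfg : IndepFun f g μ) (hf : Measurable f) (hg : Measurable g)
    (hemb : MeasurableEmbedding fun ω ↦ (f ω, g ω)) (s : Set α) (t : Set β) :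
    μ (f ⁻¹' s ∩ g ⁻¹' t) = μ (f ⁻¹' s) * μ (g ⁻¹' t) := by
  have key : ∀ s t, μ (f ⁻¹' s ∩ g ⁻¹' t) = μ.map f s * μ.map g t := fun s t ↦ by
    rw [← mk_preimage_prod, ← hemb.map_apply,
      hfg.map_prod_eq_prod_map_map hf.aemeasurable hg.aemeasurable, Measure.prod_prod]
  have hf_univ : μ.map f univ = 1 := by rw [Measure.map_apply hf .univ]; simp
  have hg_univ : μ.map g univ = 1 := by rw [Measure.map_apply hg .univ]; simp
  have hs := key s univ
  have ht := key univ t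
  rw [preimage_univ, inter_univ, hg_univ, mul_one] at hs
  rw [preimage_univ, univ_inter, hf_univ, one_mul] at ht
  rw [key, hs, ht]

variable {ι : Type*} {X : ι → Type*}

lemma DependsOn.of_imp {B : Set ι} {S : Set (∀ i, X i)}
    (h : ∀ x y, (∀ i ∈ B, x i = y i) → x ∈ S → y ∈ S) : DependsOn (· ∈ S) B :=
  fun x y hxy ↦ propext ⟨h x y hxy, h y x fun i hi ↦ (hxy i hi).symm⟩

lemma DependsOn.preimage_image_domRestrict {B : Set ι} {S : Set (∀ i, X i)}
    (hS : DependsOn (· ∈ S) B) : B.domRestrict ⁻¹' (B.domRestrict '' S) = S := by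
  refine Subset.antisymm ?_ (subset_preimage_image _ _)
  rintro x ⟨x', hx', hxx'⟩
  exact Eq.mp (hS fun i hi ↦ congrFun hxx' ⟨i, hi⟩) hx'

lemma DependsOn.mem_inter {B : Set ι} {S T : Set (∀ i, X i)} (hS : DependsOn (· ∈ S) B)
    (hT : DependsOn (· ∈ T) B) : DependsOn (· ∈ S ∩ T) B := fun x y h ↦ by
  have hS' : (x ∈ S) = (y ∈ S) := hS h
  have hT' : (x ∈ T) = (y ∈ T) := hT h
  change (_ ∧ _) = (_ ∧ _)
  rw [hS', hT']

variable [∀ i, MeasurableSpace (X i)]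

lemma ProbabilityTheory.iIndepFun.indepFun_domRestrict_compl {μ : Measure (∀ i, X i)}
    (hμ : iIndepFun (fun i (x : ∀ i, X i) ↦ x i) μ) (B : Set ι) :
    IndepFun B.domRestrict Bᶜ.domRestrict μ := by
  have h := indep_iSup_of_disjoint (fun i ↦ (measurable_pi_apply i).comap_le) hμ
    (disjoint_compl_right (a := B))
  have hle : ∀ C : Set ι, MeasurableSpace.comap C.domRestrict inferInstance ≤
      ⨆ i ∈ C, MeasurableSpace.comap (fun x : ∀ i, X i ↦ x i) inferInstance := fun C ↦ by
    rw [MeasurableSpace.pi, MeasurableSpace.comap_iSup]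
    refine iSup_le fun i ↦ ?_
    rw [MeasurableSpace.comap_comp]
    exact le_iSup₂ (f := fun i (_ : i ∈ C) ↦
      MeasurableSpace.comap (fun x : ∀ i, X i ↦ x i) inferInstance) i.1 i.2
  exact indep_of_indep_of_le_right (indep_of_indep_of_le_left h (hle B)) (hle Bᶜ)

theorem ProbabilityTheory.iIndepFun.measure_inter_eq_mul_of_dependsOn
    {μ : Measure (∀ i, X i)} [IsProbabilityMeasure μ]
    (hμ : iIndepFun (fun i (x : ∀ i, X i) ↦ x i) μ) {B : Set ι} {S T : Set (∀ i, X i)}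
    (hS : DependsOn (· ∈ S) B) (hT : DependsOn (· ∈ T) Bᶜ) :
    μ (S ∩ T) = μ S * μ T := by
  -- `S` and `T` need not be measurable; their outer measures are computed in the product.
  rw [← hS.preimage_image_domRestrict, ← hT.preimage_image_domRestrict]
  exact (hμ.indepFun_domRestrict_compl B).measure_inter_preimage_eq_mul_of_measurableEmbedding
    (by fun_prop) (by fun_prop)
    (MeasurableEquiv.piEquivPiSubtypeProd X (· ∈ B)).measurableEmbedding _ _

lemma DependsOn.measurableSet_of_finite [∀ i, Countable (X i)]
    [∀ i, MeasurableSingletonClass (X i)] {B : Set ι} (hB : B.Finite) {S : Set (∀ i, X i)}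
    (hS : DependsOn (· ∈ S) B) : MeasurableSet S := by
  have := hB.to_subtype
  rw [← hS.preimage_image_domRestrict]
  exact (Set.measurable_restrict B) (.of_discrete)

end

lemma MeasureTheory.Measure.eq_sum_restrict_of_ae_partition {α ι : Type*} [MeasurableSpace α]
    [Countable ι] {μ : Measure α} {G : ι → Set α} (hG : ∀ i, MeasurableSet (G i))
    (hdisj : Pairwise (Function.onFun Disjoint G)) (hcover : μ (⋃ i, G i)ᶜ = 0) :
    μ = Measure.sum fun i ↦ μ.restrict (G i) := by
  rw [← Measure.restrict_iUnion hdisj hG, Measure.restrict_eq_self_of_ae_mem]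
  exact hcover

namespace Percolation

open Set ProbabilityTheory

variable {d : ℕ}

namespace Model

instance (M : Model d) (p : ℝ) : IsProbabilityMeasure (M.P p) := M.P_prob p

variable (M : Model d) {p : ℝ}

abbrev bondLaw (p : ℝ) (e : Edge d) : Measure Bool := (M.P p).map fun ω ↦ ω e

instance (p : ℝ) (e : Edge d) : IsProbabilityMeasure (M.bondLaw p e) :=
  Measure.isProbabilityMeasure_map (measurable_pi_apply e).aemeasurable

lemma bondLaw_singleton (hp0 : 0 ≤ p) (hp1 : ∀ x, p * M.D x ≤ 1) (e : Edge d) (b : Bool) :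
    M.bondLaw p e {b} =
      ENNReal.ofReal (if b then p * edgeProb M.D e else 1 - p * edgeProb M.D e) := by
  rw [Measure.map_apply (measurable_pi_apply e) (measurableSet_singleton b)]
  simpa [Set.preimage] using M.P_cylinder p hp0 hp1 {e} fun _ ↦ b

lemma map_restrict_eq_pi (hp0 : 0 ≤ p) (hp1 : ∀ x, p * M.D x ≤ 1) (I : Finset (Edge d)) :
    (M.P p).map I.restrict = Measure.pi fun e : I ↦ M.bondLaw p e := by
  classical
  refine Measure.ext_iff_singleton.2 fun g ↦ ?_
  set f : Edge d → Bool := fun e ↦ if h : e ∈ I then g ⟨e, h⟩ else false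
  have hpre : Finset.restrict (π := fun _ ↦ Bool) I ⁻¹' {g} =
      {ω : Config d | ∀ e ∈ I, ω e = f e} := by
    ext ω
    simp +contextual [funext_iff, f]
  rw [Measure.map_apply (Finset.measurable_restrict I) (measurableSet_singleton g), hpre,
    M.P_cylinder p hp0 hp1, Measure.pi_singleton, ← Finset.prod_coe_sort I]
  refine Finset.prod_congr rfl fun e _ ↦ ?_
  rw [bondLaw_singleton M hp0 hp1]
  simp [f]

theorem eq_infinitePi (hp0 : 0 ≤ p) (hp1 : ∀ x, p * M.D x ≤ 1) :
    M.P p = Measure.infinitePi (M.bondLaw p) :=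
  IsProjectiveLimit.unique (M.map_restrict_eq_pi hp0 hp1) (Measure.isProjectiveLimit_infinitePi _)

theorem iIndepFun_bonds (hp0 : 0 ≤ p) (hp1 : ∀ x, p * M.D x ≤ 1) :
    iIndepFun (fun e (ω : Config d) ↦ ω e) (M.P p) := by
  rw [iIndepFun_iff_map_fun_eq_infinitePi_map measurable_pi_apply, Measure.map_id']
  exact M.eq_infinitePi hp0 hp1

end Model

lemma edgeProb_map_add (D : Vert d → ℝ) (w : Vert d) (e : Edge d) :
    edgeProb D (e.map (· + w)) = edgeProb D e := by
  induction e using Sym2.ind with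
  | _ a b => simp [edgeProb, symD]

def edgeShift (w : Vert d) : Edge d ≃ Edge d where
  toFun := Sym2.map (· + w)
  invFun := Sym2.map (· - w)
  left_inv e := by simp [Sym2.map_map]
  right_inv e := by simp [Sym2.map_map]

/- Built from `piCongrLeft` so that it is a measurable equivalence: `map_apply` then holds for
arbitrary, possibly non-measurable, events such as `{(cluster ω 0).Infinite}`. -/
def shiftConfig (w : Vert d) : Config d ≃ᵐ Config d :=
  MeasurableEquiv.piCongrLeft (fun _ ↦ Bool) (edgeShift w).symm

lemma shiftConfig_apply (w : Vert d) (ω : Config d) (e : Edge d) :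
    shiftConfig w ω e = ω (e.map (· + w)) := by
  conv_lhs => rw [← (edgeShift w).symm_apply_apply e]
  exact MeasurableEquiv.piCongrLeft_apply_apply _ _ _

lemma Connected.shiftConfig {ω : Config d} {a b : Vert d} (h : Connected ω a b) (w : Vert d) :
    Connected (shiftConfig w ω) (a - w) (b - w) := by
  refine Relation.ReflTransGen.lift (· - w) (fun x z hxz ↦ ⟨?_, ?_⟩) a b h
  · exact fun h ↦ hxz.1 (sub_left_injective h)
  · simpa [shiftConfig_apply] using hxz.2

lemma cluster_subset_image_shiftConfig (ω : Config d) (w : Vert d) :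
    cluster ω w ⊆ (· + w) '' cluster (shiftConfig w ω) 0 := fun z hz ↦
  ⟨z - w, by simpa [cluster] using Connected.shiftConfig hz w, sub_add_cancel z w⟩

namespace Model

variable (M : Model d) {p : ℝ}

lemma bondLaw_edgeShift (hp0 : 0 ≤ p) (hp1 : ∀ x, p * M.D x ≤ 1) (w : Vert d) (e : Edge d) :
    M.bondLaw p (edgeShift w e) = M.bondLaw p e := by
  refine Measure.ext_iff_singleton.2 fun b ↦ ?_
  rw [bondLaw_singleton M hp0 hp1, bondLaw_singleton M hp0 hp1]
  simp [edgeShift, edgeProb_map_add]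

theorem map_shiftConfig (hp0 : 0 ≤ p) (hp1 : ∀ x, p * M.D x ≤ 1) (w : Vert d) :
    (M.P p).map (shiftConfig w) = M.P p := by
  have h : (fun e ↦ M.bondLaw p ((edgeShift w).symm e)) = M.bondLaw p :=
    funext fun e ↦ by rw [← M.bondLaw_edgeShift hp0 hp1 w, Equiv.apply_symm_apply]
  rw [M.eq_infinitePi hp0 hp1]
  nth_rw 1 [← h]
  exact Measure.infinitePi_map_piCongrLeft (M.bondLaw p) (edgeShift w).symm

theorem measure_cluster_infinite_eq_zero (hp0 : 0 ≤ p) (hp1 : ∀ x, p * M.D x ≤ 1)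
    (htheta : M.P p {ω | (cluster ω 0).Infinite} = 0) (y : Vert d) :
    M.P p {ω | (cluster ω y).Infinite} = 0 := by
  have hshift : M.P p (shiftConfig y ⁻¹' {ω | (cluster ω 0).Infinite}) = 0 := by
    rw [← MeasurableEquiv.map_apply, M.map_shiftConfig hp0 hp1, htheta]
  refine measure_mono_null (fun ω hω ↦ ?_) hshift
  exact (hω.mono (cluster_subset_image_shiftConfig ω y)).of_image _

end Model

lemma measurableSet_openStep (a b : Vert d) : MeasurableSet {ω : Config d | openStep ω a b} :=
  (MeasurableSet.const (a ≠ b)).inter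
    (measurableSet_eq_fun (measurable_pi_apply _) measurable_const)

lemma measurableSet_isChain_openStep (l : List (Vert d)) :
    MeasurableSet {ω : Config d | l.IsChain (openStep ω)} := by
  induction l with
  | nil => simp
  | cons a l ih =>
    cases l with
    | nil => simp
    | cons b l =>
      simp only [List.isChain_cons_cons]
      exact (measurableSet_openStep a b).inter ih

lemma measurableSet_connected (a b : Vert d) :
    MeasurableSet {ω : Config d | Connected ω a b} := by
  have h : {ω : Config d | Connected ω a b} =
      ⋃ (l : List (Vert d)) (_ : (a :: l).getLast (List.cons_ne_nil a l) = b),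
        {ω | (a :: l).IsChain (openStep ω)} := by
    ext ω
    simp only [mem_ofPred_eq, mem_iUnion]
    exact ⟨fun h ↦
        (List.exists_isChain_cons_of_relationReflTransGen h).imp fun _ h ↦ ⟨h.2, h.1⟩,
      fun ⟨l, hl, hc⟩ ↦ List.relationReflTransGen_of_exists_isChain_cons l hc hl⟩
  rw [h]
  exact .iUnion fun l ↦ .iUnion fun _ ↦ measurableSet_isChain_openStep _

lemma measurable_closeEdge (e : Edge d) : Measurable fun ω : Config d ↦ closeEdge ω e :=
  measurable_update' (a := e) |>.comp (measurable_id.prodMk measurable_const)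

lemma measurableSet_tilC_eq (u v y : Vert d) (A : Set (Vert d)) :
    MeasurableSet {ω : Config d | tilC ω u v y = A} := by
  simp only [Set.ext_iff, ofPred_forall]
  refine .iInter fun z ↦ ?_
  by_cases hz : z ∈ A
  · simp only [hz, iff_true]
    exact measurable_closeEdge _ (measurableSet_connected y z)
  · simp only [hz, iff_false]
    exact (measurable_closeEdge _ (measurableSet_connected y z)).compl

lemma Connected.mono {ω ω' : Config d} (h : ∀ e, ω e = true → ω' e = true) {a b : Vert d}
    (hc : Connected ω a b) : Connected ω' a b :=
  Relation.ReflTransGen.mono (p := openStep ω') (fun _ _ hxz ↦ ⟨hxz.1, h _ hxz.2⟩) _ _ hc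

lemma cluster_eq_of_eqOn {ω ω' : Config d} {y : Vert d}
    (h : ∀ e, (∃ z ∈ e, z ∈ cluster ω y) → ω' e = ω e) : cluster ω' y = cluster ω y := by
  ext z
  constructor <;> intro hz
  · induction hz with
    | refl => exact .refl
    | tail _ hbc ih =>
      exact ih.tail ⟨hbc.1, by rw [← h _ ⟨_, Sym2.mem_mk_left _ _, ih⟩]; exact hbc.2⟩
  · induction hz with
    | refl => exact .refl
    | tail hyb hbc ih =>
      exact ih.tail ⟨hbc.1, by rw [h _ ⟨_, Sym2.mem_mk_left _ _, hyb⟩]; exact hbc.2⟩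

lemma closeEdge_eq_true {ω : Config d} {e e' : Edge d} (h : closeEdge ω e e' = true) :
    ω e' = true := by
  unfold closeEdge at h
  by_cases he : e' = e
  · simp [he] at h
  · rwa [Function.update_of_ne he] at h

lemma tilC_subset_cluster (ω : Config d) (u v y : Vert d) : tilC ω u v y ⊆ cluster ω y :=
  fun _ ↦ Connected.mono fun _ ↦ closeEdge_eq_true

lemma tilC_update (ω : Config d) (u v y : Vert d) (b : Bool) :
    tilC (Function.update ω s(u, v) b) u v y = tilC ω u v y := by
  simp only [tilC, closeEdge, Function.update_idem]

lemma restrictConfig_of_mem {ω : Config d} {A : Set (Vert d)} {e : Edge d} (he : e ∈ A.sym2) :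
    restrictConfig ω A e = ω e :=
  if_pos (Set.mem_sym2_iff_forall.1 he)

lemma restrictConfig_eq_true {ω : Config d} {A : Set (Vert d)} {e : Edge d}
    (h : restrictConfig ω A e = true) : ω e = true := by
  unfold restrictConfig at h
  split_ifs at h
  exact h

lemma restrictConfig_congr {ω ω' : Config d} {A : Set (Vert d)}
    (h : ∀ e ∈ A.sym2, ω e = ω' e) : restrictConfig ω A = restrictConfig ω' A := by
  funext e
  unfold restrictConfig
  split_ifs with he
  exacts [h e (Set.mem_sym2_iff_forall.2 he), rfl]

lemma restrictConfig_update_of_notMem {ω : Config d} {A : Set (Vert d)} {e : Edge d}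
    (he : e ∉ A.sym2) (b : Bool) :
    restrictConfig (Function.update ω e b) A = restrictConfig ω A :=
  restrictConfig_congr fun _ he' ↦ Function.update_of_ne (ne_of_mem_of_not_mem he' he) _ _

lemma closeEdge_restrictConfig (ω : Config d) (A : Set (Vert d)) (e : Edge d) :
    closeEdge (restrictConfig ω A) e = restrictConfig (closeEdge ω e) A := by
  funext e'
  by_cases he : e' = e
  · subst he
    simp [closeEdge, restrictConfig]
  · simp [closeEdge, restrictConfig, Function.update_of_ne he]

lemma cluster_restrictConfig_cluster (ω : Config d) (y : Vert d) :
    cluster (restrictConfig ω (cluster ω y)) y = cluster ω y := by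
  refine Subset.antisymm (fun z ↦ Connected.mono fun _ ↦ restrictConfig_eq_true) fun z hz ↦ ?_
  induction hz with
  | refl => exact .refl
  | @tail b c hyb hbc ih =>
    have hbc_mem : s(b, c) ∈ (cluster ω y).sym2 := ⟨hyb, hyb.tail hbc⟩
    exact ih.tail ⟨hbc.1, by rw [restrictConfig_of_mem hbc_mem]; exact hbc.2⟩

lemma tilC_restrictConfig_tilC (ω : Config d) (u v y : Vert d) :
    tilC (restrictConfig ω (tilC ω u v y)) u v y = tilC ω u v y := by
  change cluster (closeEdge (restrictConfig ω _) _) y = cluster (closeEdge ω s(u, v)) y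
  rw [closeEdge_restrictConfig]
  exact cluster_restrictConfig_cluster _ y

lemma dependsOn_occursOn (E : Set (Config d)) (A : Set (Vert d)) :
    DependsOn (· ∈ {ω | OccursOn E A ω}) A.sym2 := fun ω ω' h ↦ by
  change (restrictConfig ω A ∈ E) = (restrictConfig ω' A ∈ E)
  rw [restrictConfig_congr h]

lemma dependsOn_tilC_eq (u v y : Vert d) (A : Set (Vert d)) :
    DependsOn (· ∈ {ω | tilC ω u v y = A}) (Aᶜ.sym2)ᶜ := by
  refine DependsOn.of_imp fun ω ω' h (hω : tilC ω u v y = A) ↦ ?_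
  change tilC ω' u v y = A
  rw [← hω]
  refine cluster_eq_of_eqOn fun e ⟨z, hz, hzA⟩ ↦ ?_
  have he : e ∉ Aᶜ.sym2 := fun h' ↦ Set.mem_sym2_iff_forall.1 h' z hz (hω ▸ hzA)
  simp only [closeEdge, Function.update_apply, h e he]

lemma sym2_subset_compl_sym2_compl (A : Set (Vert d)) : A.sym2 ⊆ (Aᶜ.sym2)ᶜ := by
  intro e
  induction e using Sym2.ind with
  | _ a b => exact fun hab hab' ↦ hab'.1 hab.1

lemma dependsOn_occursOff (F : Set (Config d)) (A : Set (Vert d)) :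
    DependsOn (· ∈ {ω | OccursOff F A ω}) Aᶜ.sym2 :=
  dependsOn_occursOn F Aᶜ

lemma mem_and_notMem_of_occursOn {E : Set (Config d)} {u v y : Vert d}
    (hE : E ⊆ {ω | u ∈ tilC ω u v y ∧ v ∉ tilC ω u v y}) {ω : Config d} {A : Set (Vert d)}
    (hA : tilC ω u v y = A) (h : OccursOn E A ω) : u ∈ A ∧ v ∉ A := by
  subst hA
  simpa only [mem_ofPred_eq, tilC_restrictConfig_tilC] using hE h

theorem update_mem_occursOn_occursOff_iff {E : Set (Config d)} (F : Set (Config d))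
    {u v y : Vert d} (hE : E ⊆ {ω | u ∈ tilC ω u v y ∧ v ∉ tilC ω u v y})
    (ω : Config d) (b : Bool) :
    Function.update ω s(u, v) b ∈
        {ω' | OccursOn E (tilC ω' u v y) ω' ∧ OccursOff F (tilC ω' u v y) ω'} ↔
      ω ∈ {ω' | OccursOn E (tilC ω' u v y) ω' ∧ OccursOff F (tilC ω' u v y) ω'} := by
  simp only [mem_ofPred_eq, tilC_update]
  by_cases huv : u ∈ tilC ω u v y ∧ v ∉ tilC ω u v y
  · have hon : s(u, v) ∉ (tilC ω u v y).sym2 := fun h ↦ huv.2 h.2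
    have hoff : s(u, v) ∉ (tilC ω u v y)ᶜ.sym2 := fun h ↦ h.1 huv.1
    rw [OccursOn, OccursOff, restrictConfig_update_of_notMem hon,
      restrictConfig_update_of_notMem hoff]
    rfl
  · exact iff_of_false (fun h ↦ huv (mem_and_notMem_of_occursOn hE (tilC_update ω u v y b) h.1))
      fun h ↦ huv (mem_and_notMem_of_occursOn hE rfl h.1)

namespace Model

variable (M : Model d) {p : ℝ}

lemma measure_inter_tilC_eq_setLIntegral (hp0 : 0 ≤ p) (hp1 : ∀ x, p * M.D x ≤ 1)
    (u v y : Vert d) (E F : Set (Config d)) (A : Finset (Vert d)) :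
    M.P p ({ω | OccursOn E (tilC ω u v y) ω ∧ OccursOff F (tilC ω u v y) ω} ∩
        {ω | tilC ω u v y = A}) =
      ∫⁻ ω₀ in {ω | tilC ω u v y = A}, ind (OccursOn E (tilC ω₀ u v y) ω₀) *
        M.P p {ω₁ | OccursOff F (tilC ω₀ u v y) ω₁} ∂M.P p := by
  set G := {ω : Config d | tilC ω u v y = A}
  set EA := {ω : Config d | OccursOn E A ω}
  set FA := {ω : Config d | OccursOff F A ω}
  have hEA : MeasurableSet EA := (dependsOn_occursOn E A).measurableSet_of_finite
    (by simpa only [Finset.coe_sym2] using A.sym2.finite_toSet)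
  have hsplit : {ω | OccursOn E (tilC ω u v y) ω ∧ OccursOff F (tilC ω u v y) ω} ∩ G =
      FA ∩ (G ∩ EA) := by
    ext ω
    by_cases hω : tilC ω u v y = A <;> simp [G, EA, FA, hω, and_comm]
  have hf : EqOn (fun ω₀ ↦ ind (OccursOn E (tilC ω₀ u v y) ω₀) *
      M.P p {ω₁ | OccursOff F (tilC ω₀ u v y) ω₁}) (EA.indicator fun _ ↦ M.P p FA) G :=
    fun ω (hω : tilC ω u v y = A) ↦ by
      by_cases hE : ω ∈ EA <;> simp_all [ind, EA, FA]
  rw [hsplit, (M.iIndepFun_bonds hp0 hp1).measure_inter_eq_mul_of_dependsOn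
      (dependsOn_occursOff F A)
      ((dependsOn_tilC_eq u v y A).mem_inter
        ((dependsOn_occursOn E A).mono (sym2_subset_compl_sym2_compl _))),
    setLIntegral_congr_fun (measurableSet_tilC_eq u v y A) hf, lintegral_indicator_const hEA,
    Measure.restrict_apply hEA, inter_comm EA]

theorem measure_occursOn_occursOff_eq_lintegral (hp0 : 0 ≤ p) (hp1 : ∀ x, p * M.D x ≤ 1)
    (htheta : M.P p {ω | (cluster ω 0).Infinite} = 0) (u v y : Vert d) (E F : Set (Config d)) :
    M.P p {ω | OccursOn E (tilC ω u v y) ω ∧ OccursOff F (tilC ω u v y) ω} =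
      ∫⁻ ω₀, ind (OccursOn E (tilC ω₀ u v y) ω₀) *
        M.P p {ω₁ | OccursOff F (tilC ω₀ u v y) ω₁} ∂M.P p := by
  set G : Finset (Vert d) → Set (Config d) := fun A ↦ {ω | tilC ω u v y = A}
  have hG : ∀ A, MeasurableSet (G A) := fun A ↦ measurableSet_tilC_eq u v y A
  have hdisj : Pairwise (Function.onFun Disjoint G) := fun A A' hAA' ↦
    Set.disjoint_left.2 fun ω (hA : tilC ω u v y = A) (hA' : tilC ω u v y = A') ↦
      hAA' (Finset.coe_injective (hA.symm.trans hA'))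
  have hcover : M.P p (⋃ A, G A)ᶜ = 0 := by
    refine measure_mono_null ?_ (M.measure_cluster_infinite_eq_zero hp0 hp1 htheta y)
    intro ω hω hfin
    exact hω (mem_iUnion.2 ⟨(hfin.subset (tilC_subset_cluster ω u v y)).toFinset, by simp [G]⟩)
  have hsum := Measure.eq_sum_restrict_of_ae_partition hG hdisj hcover
  calc _ = ∑' A, M.P p ({ω | OccursOn E (tilC ω u v y) ω ∧ OccursOff F (tilC ω u v y) ω} ∩
          G A) := by
        conv_lhs => rw [hsum]
        simp_rw [Measure.sum_apply_of_countable, Measure.restrict_apply' (hG _)]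
    _ = ∑' A, ∫⁻ ω₀ in G A, _ ∂M.P p :=
        tsum_congr fun A ↦ M.measure_inter_tilC_eq_setLIntegral hp0 hp1 u v y E F A
    _ = _ := by rw [← lintegral_sum_measure, ← hsum]

end Model

/-- **Lemma 2.2** (Factorization Lemma). Fix `p ∈ [0, ‖D‖_∞⁻¹]` with
`θ(p) = 0`, a directed bond `(u,v)`, a vertex `y` and events `E, F`. Then
`E_p[1{E on C̃^{(u,v)}(y), F off C̃^{(u,v)}(y)}]
  = E_0[1{E on C̃^{(u,v)}_0(y)} · E_1[1{F off C̃^{(u,v)}_0(y)}]]`,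
the inner expectation being over a second, independent configuration with the
same law. Moreover, when `E ⊆ {u ∈ C̃^{(u,v)}(y)} ∩ {v ∉ C̃^{(u,v)}(y)}`, the
event on the left-hand side is independent of the occupation status of the
bond `(u,v)`. -/
theorem factorization_lemma (d : ℕ) (M : Model d) (p : ℝ)
    (hp0 : 0 ≤ p) (hp1 : ∀ x, p * M.D x ≤ 1)
    (htheta : M.P p {ω | (cluster ω 0).Infinite} = 0)
    (u v y : Vert d) (E F : Set (Config d)) :
    (M.P p {ω | OccursOn E (tilC ω u v y) ω ∧ OccursOff F (tilC ω u v y) ω} =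
        ∫⁻ ω₀, ind (OccursOn E (tilC ω₀ u v y) ω₀) *
          M.P p {ω₁ | OccursOff F (tilC ω₀ u v y) ω₁} ∂ M.P p) ∧
      (E ⊆ {ω | u ∈ tilC ω u v y ∧ v ∉ tilC ω u v y} →
        ∀ (ω : Config d) (bl : Bool),
          Function.update ω s(u, v) bl ∈
              {ω' | OccursOn E (tilC ω' u v y) ω' ∧ OccursOff F (tilC ω' u v y) ω'} ↔
            ω ∈ {ω' | OccursOn E (tilC ω' u v y) ω' ∧ OccursOff F (tilC ω' u v y) ω'}) :=
  ⟨M.measure_occursOn_occursOff_eq_lintegral hp0 hp1 htheta u v y E F,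
    fun hE ↦ update_mem_occursOn_occursOff_iff F hE⟩

end Percolation
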